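/- Let A ∈ SL(2,ℝ), let v, w ∈ ℝ² be nonzero vectors, let ε = ±1, and suppose A v = ε w. Let R_v be the matrix with columns v and Tv/‖v‖², and R_w the matrix with columns w and Tw/‖w‖², where T(x,y) = (−y,x). Then R_w^{-1} A R_v is upper triangular with both diagonal entries equal to ε, i.e., R_w^{-1} A R_v = [[ε, ν],[0, ε]] for some real ν. -/

import Mathlib

/-!
The frame `R_u` with columns `u` and `T u / ‖u‖²` has determinant `1` and sends `e₁` to `u`.
Hence `M = R_w⁻¹ A R_v` has determinant `1` and `M e₁ = R_w⁻¹ (ε w) = ε e₁`, so its first column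
is `(ε, 0)`, and `det M = ε M₁₁ = 1` together with `ε² = 1` forces `M₁₁ = ε`.
-/

open Matrix

lemma sq_add_sq_ne_zero_of_ne {R : Type*} [Ring R] [LinearOrder R] [IsStrictOrderedRing R]
    {a b : R} (h : (a, b) ≠ (0, 0)) : a ^ 2 + b ^ 2 ≠ 0 := by
  rw [sq, sq, Ne, mul_self_add_mul_self_eq_zero]
  simpa [Prod.ext_iff] using h

section Frame

variable {K : Type*} [Field K]

def normalFrame (a b : K) : Matrix (Fin 2) (Fin 2) K :=
  !![a, -b / (a ^ 2 + b ^ 2); b, a / (a ^ 2 + b ^ 2)]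

lemma det_normalFrame {a b : K} (h : a ^ 2 + b ^ 2 ≠ 0) : (normalFrame a b).det = 1 := by
  rw [normalFrame, det_fin_two_of]
  field_simp
  ring

lemma normalFrame_mulVec_one_zero (a b : K) : normalFrame a b *ᵥ ![1, 0] = ![a, b] := by
  ext i
  fin_cases i <;> simp [normalFrame]

end Frame

lemma inv_mul_mul_mulVec_eq_smul {n R : Type*} [Fintype n] [DecidableEq n] [CommRing R]
    {A P Q : Matrix n n R} (hQ : IsUnit Q.det) {e v w : n → R} {ε : R}
    (hP : P *ᵥ e = v) (hQe : Q *ᵥ e = w) (hA : A *ᵥ v = ε • w) :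
    (Q⁻¹ * A * P) *ᵥ e = ε • e := by
  rw [← mulVec_mulVec, ← mulVec_mulVec, hP, hA, mulVec_smul, ← hQe, mulVec_mulVec,
    nonsing_inv_mul Q hQ, one_mulVec]

lemma eq_of_det_eq_one_of_mulVec_one_zero {R : Type*} [CommRing R] {M : Matrix (Fin 2) (Fin 2) R}
    {ε : R} (hε : ε * ε = 1) (hdet : M.det = 1) (hM : M *ᵥ ![1, 0] = ![ε, 0]) :
    M = !![ε, M 0 1; 0, ε] := by
  have h00 : M 0 0 = ε := by simpa using congrFun hM 0
  have h10 : M 1 0 = 0 := by simpa using congrFun hM 1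
  have h11 : M 1 1 = ε := by
    rw [det_fin_two, h00, h10] at hdet
    linear_combination ε * hdet - M 1 1 * hε
  ext i j
  fin_cases i <;> fin_cases j <;> simp [h00, h10, h11]

theorem stmt6 (A : Matrix (Fin 2) (Fin 2) ℝ) (hA : A.det = 1)
    (v1 v2 w1 w2 ε : ℝ)
    (hv : (v1, v2) ≠ ((0 : ℝ), (0 : ℝ))) (hw : (w1, w2) ≠ ((0 : ℝ), (0 : ℝ)))
    (hε : ε = 1 ∨ ε = -1)
    (hAv : A.mulVec ![v1, v2] = ε • ![w1, w2]) :
    ∃ ν : ℝ,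
      (!![w1, -w2 / (w1 ^ 2 + w2 ^ 2); w2, w1 / (w1 ^ 2 + w2 ^ 2)] :
        Matrix (Fin 2) (Fin 2) ℝ)⁻¹ * A *
        !![v1, -v2 / (v1 ^ 2 + v2 ^ 2); v2, v1 / (v1 ^ 2 + v2 ^ 2)] =
        !![ε, ν; 0, ε] := by
  show ∃ ν, (normalFrame w1 w2)⁻¹ * A * normalFrame v1 v2 = !![ε, ν; 0, ε]
  have hε2 : ε * ε = 1 := by rcases hε with rfl | rfl <;> norm_num
  have hRv := det_normalFrame (sq_add_sq_ne_zero_of_ne hv)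
  have hRw := det_normalFrame (sq_add_sq_ne_zero_of_ne hw)
  refine ⟨_, eq_of_det_eq_one_of_mulVec_one_zero hε2 ?_ ?_⟩
  · rw [det_mul, det_mul, det_nonsing_inv, hA, hRv, hRw]
    simp
  · simpa using inv_mul_mul_mulVec_eq_smul (by simp [hRw]) (normalFrame_mulVec_one_zero v1 v2)
      (normalFrame_mulVec_one_zero w1 w2) hAv
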